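/- Sequential composition of two strategyproof rankings is not strategyproof: there exist four agents {1,2,3,4}, a selection of size 2 formed by taking the top-1 agent of a ranking f and then the top agent of a ranking h after removing the agent already chosen, such that with truthful rankings f = [1,2,3,4], h = [2,3,1,4] the winners are {1,2} (agent 3 loses), while after agent 3 changes f to f' = [2,1,3,4] (leaving agent 3's own position in f unchanged, hence not violating f's strategyproofness) the winners become {2,3} (agent 3 wins). -/

import Mathlib

/-- Combined mechanism: pick the top of ranking `f`, then the top of ranking `h`
after removing the agent already chosen. -/
def combine (f h : List ℕ) : Finset ℕ :=
  {f.headI, (h.filter (fun x => x ≠ f.headI)).headI}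

/-- Sequential composition of two strategyproof rankings is not strategyproof:
with truthful rankings f = [1,2,3,4], h = [2,3,1,4] the winners are {1,2} (agent 3
loses); after agent 3 changes f to f' = [2,1,3,4] (leaving its own position in f
unchanged) the winners become {2,3} (agent 3 wins). -/
theorem stmt6 : ∃ f h f' : List ℕ,
    f = [1, 2, 3, 4] ∧ h = [2, 3, 1, 4] ∧ f' = [2, 1, 3, 4] ∧
    f.Nodup ∧ h.Nodup ∧ f'.Nodup ∧
    -- agent 3's own position in f is unchanged by the manipulation
    f.idxOf 3 = f'.idxOf 3 ∧
    combine f h = {1, 2} ∧ 3 ∉ combine f h ∧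
    combine f' h = {2, 3} ∧ 3 ∈ combine f' h := by
  exact ⟨_,_,_,rfl,rfl,rfl,by decide,by decide,by decide,by decide,by decide,by decide⟩
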